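/- arXiv:2112.14638 — 4 statements merged into one kernel-verified Lean document; each statement's English description precedes it below -/
import Mathlib

section
/- For any separable near-metric value space (𝒴,ℓ) with 0 < ℓ̄ < ∞, every process admitting strong universal online learning for (𝒴,ℓ) also admits strong universal online learning for binary classification: SUOL_{(𝒳,ρ,𝒴,ℓ)} ⊆ SUOL_{(𝒳,ρ,{0,1},ℓ01)}. -/
open MeasureTheory Filter Topology

/-- A near-metric loss structure on `Y`: symmetric, point-discerning, with a
relaxed triangle inequality with constant `c`. -/
structure NearMetric (Y : Type) where
  loss : Y → Y → ℝ
  nonneg : ∀ y₁ y₂, 0 ≤ loss y₁ y₂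
  symm : ∀ y₁ y₂, loss y₁ y₂ = loss y₂ y₁
  eq_zero_iff : ∀ y₁ y₂, loss y₁ y₂ = 0 ↔ y₁ = y₂
  c : ℝ
  c_nonneg : 0 ≤ c
  triangle : ∀ y₁ y₂ y₃, loss y₁ y₃ ≤ c * (loss y₂ y₁ + loss y₂ y₃)

namespace NearMetric

/-- `(Y, ℓ)` is separable: there is a countable `ℓ`-dense sequence. -/
def Separable {Y : Type} (L : NearMetric Y) : Prop :=
  ∃ s : ℕ → Y, ∀ y : Y, ∀ ε : ℝ, 0 < ε → ∃ i : ℕ, L.loss (s i) y < ε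

/-- `0 < ℓ̄ < ∞`: the supremum of the loss is positive and finite. -/
def BoundedPos {Y : Type} (L : NearMetric Y) : Prop :=
  (∃ y₁ y₂, 0 < L.loss y₁ y₂) ∧ (∃ M : ℝ, ∀ y₁ y₂, L.loss y₁ y₂ ≤ M)

/-- The σ-algebra on `Y` generated by `ℓ`-balls. -/
def mSpace {Y : Type} (L : NearMetric Y) : MeasurableSpace Y :=
  MeasurableSpace.generateFrom {B | ∃ (y : Y) (ε : ℝ), B = {y' | L.loss y y' < ε}}

/-- Measurability of a map into `Y` with respect to the ball σ-algebra of `L`. -/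
def MeasurableFun {X Y : Type} [MeasurableSpace X] (L : NearMetric Y) (f : X → Y) : Prop :=
  @Measurable X Y _ L.mSpace f

end NearMetric

/-- The 0–1 loss on any type with decidable equality. -/
def l01 (Y : Type) [DecidableEq Y] : NearMetric Y where
  loss y₁ y₂ := if y₁ = y₂ then 0 else 1
  nonneg := by intro a b; split <;> norm_num
  symm := by intro a b; simp [eq_comm]
  eq_zero_iff := by intro a b; split <;> simp_all
  c := 1
  c_nonneg := by norm_num
  triangle := by
    intro a b c
    by_cases h1 : a = c <;> by_cases h2 : b = a <;> by_cases h3 : b = c <;>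
      simp_all

/-- An online learning rule: a sequence of measurable maps
`f t : 𝒳^t × 𝒴^t × 𝒳 → 𝒴` (the history at time `t+1` has length `t`). -/
def IsLearningRule {X Y : Type} [MeasurableSpace X] (L : NearMetric Y)
    (f : (t : ℕ) → (Fin t → X) → (Fin t → Y) → X → Y) : Prop :=
  letI : MeasurableSpace Y := L.mSpace
  ∀ t : ℕ, Measurable fun p : (Fin t → X) × (Fin t → Y) × X => f t p.1 p.2.1 p.2.2

/-- The average loss of learning rule `f` on target `fstar` under process `Xp`
up to horizon `T`, at sample `ω`. -/
noncomputable def avgLoss {X Y Ω : Type} (L : NearMetric Y) (Xp : ℕ → Ω → X)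
    (f : (t : ℕ) → (Fin t → X) → (Fin t → Y) → X → Y) (fstar : X → Y)
    (T : ℕ) (ω : Ω) : ℝ :=
  (T : ℝ)⁻¹ * ∑ t ∈ Finset.range T,
    L.loss (f t (fun i => Xp i.1 ω) (fun i => fstar (Xp i.1 ω)) (Xp t ω)) (fstar (Xp t ω))

/-- The rule `f` is (strongly) consistent for target `fstar` under the process `Xp`. -/
def Consistent {X Y Ω : Type} [MeasurableSpace Ω] (μ : Measure Ω) (L : NearMetric Y)
    (Xp : ℕ → Ω → X) (f : (t : ℕ) → (Fin t → X) → (Fin t → Y) → X → Y)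
    (fstar : X → Y) : Prop :=
  ∀ᵐ ω ∂μ, Tendsto (fun T => avgLoss L Xp f fstar T ω) atTop (𝓝 0)

/-- `Xp ∈ SUOL`: the process admits strong universal online learning for
the value space `(Y, L)`. -/
def SUOL {X Y Ω : Type} [MeasurableSpace X] [MeasurableSpace Ω] (μ : Measure Ω)
    (L : NearMetric Y) (Xp : ℕ → Ω → X) : Prop :=
  ∃ f : (t : ℕ) → (Fin t → X) → (Fin t → Y) → X → Y,
    IsLearningRule L f ∧
    ∀ fstar : X → Y, L.MeasurableFun fstar → Consistent μ L Xp f fstar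

/-!
A binary label can be encoded into `Y` by sending `false, true` to two points `y₀, y₁` at positive
distance `d = ℓ(y₀, y₁)`, and a prediction in `Y` decoded back by taking the nearer of the two.
By the relaxed triangle inequality, a wrong decoding costs at most `2 c / d` times the loss of the
prediction against the encoded label. Running a universally consistent rule for `Y` on encoded
labels and decoding its predictions therefore has average 0–1 loss at most `2 c / d` times an
average loss that tends to zero.
-/

section Reduction

variable {X Y Y' Ω : Type} {L : NearMetric Y} {L' : NearMetric Y'}

def reduceRule (enc : Y' → Y) (dec : Y → Y')
    (f : (t : ℕ) → (Fin t → X) → (Fin t → Y) → X → Y) :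
    (t : ℕ) → (Fin t → X) → (Fin t → Y') → X → Y' :=
  fun t xs ys x => dec (f t xs (enc ∘ ys) x)

theorem IsLearningRule.reduceRule [MeasurableSpace X] {enc : Y' → Y} {dec : Y → Y'}
    (henc : Measurable[L'.mSpace, L.mSpace] enc) (hdec : Measurable[L.mSpace, L'.mSpace] dec)
    {f : (t : ℕ) → (Fin t → X) → (Fin t → Y) → X → Y} (hf : IsLearningRule L f) :
    IsLearningRule L' (reduceRule enc dec f) := by
  let _ := L.mSpace
  let _ := L'.mSpace
  intro t
  have hencode : Measurable fun p : (Fin t → X) × (Fin t → Y') × X =>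
      ((p.1, enc ∘ p.2.1, p.2.2) : (Fin t → X) × (Fin t → Y) × X) :=
    measurable_fst.prodMk <| (measurable_pi_lambda _ fun i =>
      henc.comp ((measurable_pi_apply i).comp (measurable_fst.comp measurable_snd))).prodMk
        (measurable_snd.comp measurable_snd)
  exact hdec.comp ((hf t).comp hencode)

theorem avgLoss_nonneg (L : NearMetric Y) (Xp : ℕ → Ω → X)
    (f : (t : ℕ) → (Fin t → X) → (Fin t → Y) → X → Y) (fstar : X → Y) (T : ℕ) (ω : Ω) :
    0 ≤ avgLoss L Xp f fstar T ω :=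
  mul_nonneg (by positivity) (Finset.sum_nonneg fun _ _ => L.nonneg _ _)

theorem avgLoss_reduceRule_le {enc : Y' → Y} {dec : Y → Y'} {K : ℝ}
    (hK : ∀ y b, L'.loss (dec y) b ≤ K * L.loss y (enc b)) (Xp : ℕ → Ω → X)
    (f : (t : ℕ) → (Fin t → X) → (Fin t → Y) → X → Y) (fstar : X → Y') (T : ℕ) (ω : Ω) :
    avgLoss L' Xp (reduceRule enc dec f) fstar T ω ≤ K * avgLoss L Xp f (enc ∘ fstar) T ω := by
  unfold avgLoss
  rw [mul_left_comm]
  refine mul_le_mul_of_nonneg_left ?_ (by positivity)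
  rw [Finset.mul_sum]
  exact Finset.sum_le_sum fun t _ => hK _ _

theorem Consistent.reduceRule [MeasurableSpace Ω] {μ : Measure Ω} {enc : Y' → Y}
    {dec : Y → Y'} {K : ℝ} (hK : ∀ y b, L'.loss (dec y) b ≤ K * L.loss y (enc b))
    {Xp : ℕ → Ω → X} {f : (t : ℕ) → (Fin t → X) → (Fin t → Y) → X → Y} {fstar : X → Y'}
    (hf : Consistent μ L Xp f (enc ∘ fstar)) :
    Consistent μ L' Xp (reduceRule enc dec f) fstar := by
  filter_upwards [hf] with ω hω
  refine squeeze_zero (fun T => avgLoss_nonneg _ _ _ _ T ω)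
    (fun T => avgLoss_reduceRule_le hK Xp f fstar T ω) ?_
  simpa using hω.const_mul K

theorem SUOL.of_loss_le_mul [MeasurableSpace X] [MeasurableSpace Ω] {μ : Measure Ω}
    {Xp : ℕ → Ω → X} {enc : Y' → Y} {dec : Y → Y'}
    (henc : Measurable[L'.mSpace, L.mSpace] enc) (hdec : Measurable[L.mSpace, L'.mSpace] dec)
    {K : ℝ} (hK : ∀ y b, L'.loss (dec y) b ≤ K * L.loss y (enc b)) :
    SUOL μ L Xp → SUOL μ L' Xp := by
  rintro ⟨f, hf, hcons⟩
  exact ⟨reduceRule enc dec f, hf.reduceRule henc hdec,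
    fun fstar hfstar => (hcons _ (henc.comp hfstar)).reduceRule hK⟩

end Reduction

theorem l01_mSpace_eq_top {α : Type} [DecidableEq α] [Countable α] : (l01 α).mSpace = ⊤ := by
  refine top_unique fun s _ => ?_
  have hsingleton (a : α) : MeasurableSet[(l01 α).mSpace] {a} := by
    apply MeasurableSpace.measurableSet_generateFrom
    refine ⟨a, 1, ?_⟩
    ext b
    by_cases h : a = b <;> simp [l01, h, eq_comm]
  simpa using MeasurableSet.biUnion s.to_countable fun a _ => hsingleton a

namespace NearMetric

variable {Y : Type} (L : NearMetric Y)

theorem measurable_loss (y₀ : Y) : Measurable[L.mSpace] (L.loss y₀) :=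
  let _ := L.mSpace
  measurable_of_Iio fun x => MeasurableSpace.measurableSet_generateFrom ⟨y₀, x, rfl⟩

theorem loss_le_two_mul_c_mul_of_loss_le {y₀ y₁ y : Y} (h : L.loss y₀ y ≤ L.loss y₁ y) :
    L.loss y₀ y₁ ≤ 2 * L.c * L.loss y y₁ := by
  have htri := L.triangle y₀ y y₁
  rw [L.symm y y₀, L.symm y y₁] at htri
  rw [L.symm y y₁]
  nlinarith [L.c_nonneg]

noncomputable def decodeNearer (y₀ y₁ y : Y) : Bool := decide (L.loss y₁ y < L.loss y₀ y)

theorem measurable_decodeNearer (y₀ y₁ : Y) :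
    Measurable[L.mSpace, (l01 Bool).mSpace] (L.decodeNearer y₀ y₁) := by
  let _ := L.mSpace
  rw [l01_mSpace_eq_top]
  refine measurable_to_bool ?_
  have hpre : L.decodeNearer y₀ y₁ ⁻¹' {true} = {y | L.loss y₁ y < L.loss y₀ y} := by
    ext y
    simp [decodeNearer]
  rw [hpre]
  exact measurableSet_lt (L.measurable_loss y₁) (L.measurable_loss y₀)

theorem loss_mul_l01_decodeNearer_le (y₀ y₁ y : Y) (b : Bool) :
    L.loss y₀ y₁ * (l01 Bool).loss (L.decodeNearer y₀ y₁ y) b ≤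
      2 * L.c * L.loss y (bif b then y₁ else y₀) := by
  have hrhs : 0 ≤ 2 * L.c * L.loss y (bif b then y₁ else y₀) :=
    mul_nonneg (mul_nonneg zero_le_two L.c_nonneg) (L.nonneg _ _)
  by_cases hb : L.decodeNearer y₀ y₁ y = b
  · simpa [hb, l01] using hrhs
  · simp only [l01, hb, if_false, mul_one]
    cases b
    · have h : L.loss y₁ y < L.loss y₀ y := by simpa [decodeNearer] using hb
      rw [L.symm y₀ y₁]
      exact L.loss_le_two_mul_c_mul_of_loss_le h.le
    · have h : L.loss y₀ y ≤ L.loss y₁ y := by simpa [decodeNearer] using hb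
      exact L.loss_le_two_mul_c_mul_of_loss_le h

end NearMetric

theorem suol_subset_suol_binary_general
    {𝒳 : Type} [MeasurableSpace 𝒳]
    {Y : Type} (L : NearMetric Y) (hbd : L.BoundedPos)
    {Ω : Type} [MeasurableSpace Ω] (μ : Measure Ω)
    (Xp : ℕ → Ω → 𝒳) :
    SUOL μ L Xp → SUOL μ (l01 Bool) Xp := by
  obtain ⟨⟨y₀, y₁, hd⟩, -⟩ := hbd
  have henc : Measurable[(l01 Bool).mSpace, L.mSpace] fun b : Bool => bif b then y₁ else y₀ := by
    rw [l01_mSpace_eq_top]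
    exact @measurable_from_top _ _ L.mSpace _
  refine SUOL.of_loss_le_mul (K := 2 * L.c / L.loss y₀ y₁) henc
    (L.measurable_decodeNearer y₀ y₁) fun y b => ?_
  rw [div_mul_eq_mul_div, le_div_iff₀ hd, mul_comm]
  exact L.loss_mul_l01_decodeNearer_le y₀ y₁ y b

/-- For any separable near-metric value space `(Y, L)` with
`0 < ℓ̄ < ∞`, every process admitting strong universal online learning for `(Y, L)`
also admits it for binary classification. -/
theorem suol_subset_suol_binary
    {𝒳 : Type} [MetricSpace 𝒳] [TopologicalSpace.SeparableSpace 𝒳]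
    [MeasurableSpace 𝒳] [BorelSpace 𝒳]
    {Y : Type} (L : NearMetric Y) (hsep : L.Separable) (hbd : L.BoundedPos)
    {Ω : Type} [MeasurableSpace Ω] (μ : Measure Ω) [IsProbabilityMeasure μ]
    (Xp : ℕ → Ω → 𝒳) (hX : ∀ t, Measurable (Xp t)) :
    SUOL μ L Xp → SUOL μ (l01 Bool) Xp :=
  suol_subset_suol_binary_general L hbd μ Xp
end

section
/- Let 𝒳 = ℝ with the Euclidean metric. For every stochastic process 𝕏 on ℝ satisfying condition SMV, the nearest neighbor learning rule is consistent for the target f* = 𝟙_A for every set A ⊆ ℝ that is a finite union of intervals: L_𝕏(NN, 𝟙_A; T) → 0 almost surely as T → ∞. (The paper states this for all 𝕏 ∈ SUOL for binary classification, every such process satisfying SMV by prior work.) -/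
open MeasureTheory Filter Topology

/-- The nearest neighbor representant index: for `t ≥ 1`, `nnIdx x t` is the smallest
`s < t` minimizing `dist (x t) (x s)` (ties broken in favor of the smallest index);
for `t = 0` it is `0` by convention. -/
noncomputable def nnIdx {X : Type} [MetricSpace X] (x : ℕ → X) (t : ℕ) : ℕ :=
  letI := Classical.propDecidable
  if h : ∃ s, s < t ∧ ∀ u, u < t → dist (x t) (x s) ≤ dist (x t) (x u) then
    Nat.find h
  else 0

/-- The average number of mistakes of the nearest neighbor rule on the binary
target `𝟙_A` along the sequence `x`, up to horizon `T`. -/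
noncomputable def nnAvgLoss {X : Type} [MetricSpace X] (x : ℕ → X) (A : Set X)
    (T : ℕ) : ℝ :=
  (T : ℝ)⁻¹ * ∑ t ∈ Finset.range T,
    |A.indicator (fun _ => (1 : ℝ)) (x (nnIdx x t)) -
      A.indicator (fun _ => (1 : ℝ)) (x t)|

/-- Condition SMV (sublinear measurable visits): for every countable measurable
partition of the instance space, the number of cells visited by the first `T` points
of the process is `o(T)` almost surely. -/
def SMV {Ω X : Type} [MeasurableSpace Ω] [MeasurableSpace X] (μ : Measure Ω)
    (Xp : ℕ → Ω → X) : Prop :=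
  ∀ A : ℕ → Set X, (∀ k, MeasurableSet (A k)) →
    Pairwise (Function.onFun Disjoint A) → (⋃ k, A k) = Set.univ →
    ∀ᵐ ω ∂μ, Tendsto
      (fun T : ℕ => (Set.ncard {k : ℕ | ∃ t, t < T ∧ Xp t ω ∈ A k} : ℝ) / T)
      atTop (𝓝 0)

/-!
If the nearest neighbour rule errs at time `t`, an endpoint `b` of one of the intervals lies
between `x t` and its nearest neighbour, so `x t` is at least as close to `b` as to every earlier
point. Partition `ℝ` around `b` into `{b}` and the dyadic shells `2 ^ j ≤ |y - b| < 2 ^ (j + 1)`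
on either side of `b`: two distinct points of a cell are closer to each other than to `b`, so such
an error is the first visit of a cell. The number of errors before `T` is therefore at most the
total number of cells visited in finitely many countable partitions, which is `o(T)` by SMV.
-/

open Set

def firstVisits {ι : Type*} (f : ℕ → ι) (T : ℕ) : Set ℕ := {t | t < T ∧ ∀ s < t, f s ≠ f t}

lemma ncard_firstVisits_le {ι : Type*} (f : ℕ → ι) (T : ℕ) :
    (firstVisits f T).ncard ≤ (f '' Iio T).ncard := by
  refine ncard_le_ncard_of_injOn f (fun t ht => mem_image_of_mem f ht.1) ?_
    ((finite_Iio T).image f)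
  intro t ht t' ht' hf
  rcases lt_trichotomy t t' with h | rfl | h
  · exact (ht'.2 t h hf).elim
  · rfl
  · exact (ht.2 t' h hf.symm).elim

section NearestNeighbor

variable {X : Type} [MetricSpace X]

lemma dist_nnIdx_le (x : ℕ → X) {t u : ℕ} (hu : u < t) :
    dist (x t) (x (nnIdx x t)) ≤ dist (x t) (x u) := by
  obtain ⟨s, hs, hmin⟩ := (Finset.range t).exists_min_image (fun s => dist (x t) (x s))
    ⟨u, Finset.mem_range.mpr hu⟩
  have h : ∃ s, s < t ∧ ∀ u, u < t → dist (x t) (x s) ≤ dist (x t) (x u) :=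
    ⟨s, Finset.mem_range.mp hs, fun u hu => hmin u (Finset.mem_range.mpr hu)⟩
  rw [nnIdx, dif_pos h]
  exact (@Nat.find_spec _ (fun _ => Classical.propDecidable _) h).2 u hu

lemma nnAvgLoss_eq_ncard_div (x : ℕ → X) (A : Set X) (T : ℕ) :
    nnAvgLoss x A T = ({t | t < T ∧ Xor (x t ∈ A) (x (nnIdx x t) ∈ A)}.ncard : ℝ) / T := by
  classical
  have hset : {t | t < T ∧ Xor (x t ∈ A) (x (nnIdx x t) ∈ A)} =
      ↑((Finset.range T).filter fun t => Xor (x t ∈ A) (x (nnIdx x t) ∈ A)) := by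
    ext t; simp
  rw [nnAvgLoss, inv_mul_eq_div, hset, ncard_coe_finset, Finset.natCast_card_filter]
  congr 1
  refine Finset.sum_congr rfl fun t _ => ?_
  by_cases h₁ : x t ∈ A <;> by_cases h₂ : x (nnIdx x t) ∈ A <;> simp [h₁, h₂, Xor]

lemma mem_firstVisits_of_dist_le {ι : Type*} {c : X → ι} {b : X}
    (hc : ∀ y z, c y = c z → y ≠ z → dist y z < dist y b) (x : ℕ → X) {t T : ℕ} (ht : t < T)
    (hne : x t ≠ x (nnIdx x t)) (hb : dist (x t) b ≤ dist (x t) (x (nnIdx x t))) :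
    t ∈ firstVisits (c ∘ x) T := by
  refine ⟨ht, fun s hs hcs => ?_⟩
  have hnn := dist_nnIdx_le x hs
  by_cases hxs : x t = x s
  · have : dist (x t) (x s) = 0 := by rw [hxs, dist_self]
    exact hne (dist_le_zero.mp (hnn.trans this.le))
  · linarith [hc (x t) (x s) hcs.symm hxs]

lemma nnAvgLoss_le_sum_ncard_image {ι : Type*} {c : X → X → ι}
    (hc : ∀ b y z, c b y = c b z → y ≠ z → dist y z < dist y b) (x : ℕ → X) {A : Set X}
    {B : Finset X} (hB : ∀ u v, Xor (u ∈ A) (v ∈ A) → ∃ b ∈ B, dist u b ≤ dist u v) (T : ℕ) :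
    nnAvgLoss x A T ≤ ∑ b ∈ B, (((fun t => c b (x t)) '' Iio T).ncard : ℝ) / T := by
  have hmistakes : {t | t < T ∧ Xor (x t ∈ A) (x (nnIdx x t) ∈ A)} ⊆
      ⋃ b ∈ B, firstVisits (c b ∘ x) T := by
    rintro t ⟨ht, hxor⟩
    have hne : x t ≠ x (nnIdx x t) := fun h => by rw [← h] at hxor; simp [Xor] at hxor
    obtain ⟨b, hbB, hb⟩ := hB _ _ hxor
    exact mem_biUnion hbB (mem_firstVisits_of_dist_le (hc b) x ht hne hb)
  have hfin : (⋃ b ∈ B, firstVisits (c b ∘ x) T).Finite :=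
    (finite_Iio T).subset (iUnion₂_subset fun _ _ _ ht => ht.1)
  calc nnAvgLoss x A T
      = ({t | t < T ∧ Xor (x t ∈ A) (x (nnIdx x t) ∈ A)}.ncard : ℝ) / T :=
        nnAvgLoss_eq_ncard_div x A T
    _ ≤ ((⋃ b ∈ B, firstVisits (c b ∘ x) T).ncard : ℝ) / T := by gcongr
    _ ≤ (∑ b ∈ B, (firstVisits (c b ∘ x) T).ncard : ℝ) / T := by
        gcongr; exact_mod_cast B.set_ncard_biUnion_le _
    _ ≤ ∑ b ∈ B, (((fun t => c b (x t)) '' Iio T).ncard : ℝ) / T := by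
        rw [Finset.sum_div]; gcongr; exact ncard_firstVisits_le _ T

end NearestNeighbor

lemma SMV.ae_tendsto_ncard_image_div {Ω X : Type} [MeasurableSpace Ω] [MeasurableSpace X]
    {μ : Measure Ω} {Xp : ℕ → Ω → X} (h : SMV μ Xp) {ι : Type*} [Countable ι]
    [MeasurableSpace ι] [MeasurableSingletonClass ι] {c : X → ι} (hc : Measurable c) :
    ∀ᵐ ω ∂μ, Tendsto (fun T : ℕ => (((fun t => c (Xp t ω)) '' Iio T).ncard : ℝ) / T)
      atTop (𝓝 0) := by
  obtain ⟨e, he⟩ := Countable.exists_injective_nat ι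
  have hcells := h (fun k => c ⁻¹' (e ⁻¹' {k})) (fun k => hc (to_countable _).measurableSet)
    (fun k k' hk => ((disjoint_singleton.mpr hk).preimage e).preimage c)
    (eq_univ_of_forall fun y => mem_iUnion.mpr ⟨e (c y), rfl⟩)
  filter_upwards [hcells] with ω hω
  convert hω using 4 with T
  have hvisited : {k | ∃ t, t < T ∧ Xp t ω ∈ c ⁻¹' (e ⁻¹' {k})} =
      e '' ((fun t => c (Xp t ω)) '' Iio T) := by
    ext k; simp [eq_comm]
  rw [hvisited, ncard_image_of_injective _ he]

lemma abs_sub_lt_of_intLog_eq {r s : ℝ} (hr : 0 < r) (hs : 0 < s)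
    (h : Int.log 2 r = Int.log 2 s) : |r - s| < r := by
  have hr₁ : (2 : ℝ) ^ Int.log 2 r ≤ r := by exact_mod_cast Int.zpow_log_le_self one_lt_two hr
  have hr₂ : r < 2 ^ Int.log 2 r * 2 := by
    rw [← zpow_add_one₀ two_ne_zero]; exact_mod_cast Int.lt_zpow_succ_log_self one_lt_two r
  have hs₁ : (2 : ℝ) ^ Int.log 2 r ≤ s := by
    rw [h]; exact_mod_cast Int.zpow_log_le_self one_lt_two hs
  have hs₂ : s < 2 ^ Int.log 2 r * 2 := by
    rw [h, ← zpow_add_one₀ two_ne_zero]; exact_mod_cast Int.lt_zpow_succ_log_self one_lt_two s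
  rw [abs_sub_lt_iff]; constructor <;> linarith

lemma SignType.intCast_strictMono : StrictMono fun s : SignType => (s : ℤ) := by
  intro s s'; cases s <;> cases s' <;> decide

/-- Index of the cell containing `y` in the partition of `ℝ` into `{b}` and the shells
`2 ^ j ≤ |y - b| < 2 ^ (j + 1)` on either side of `b`; the sign is needed because
`Int.log 2 0 = 0`. -/
noncomputable def dyadicIdx (b y : ℝ) : ℤ × ℤ := (SignType.sign (y - b), Int.log 2 |y - b|)

lemma measurable_dyadicIdx (b : ℝ) : Measurable (dyadicIdx b) := by
  have hsign : Monotone fun y : ℝ => ((SignType.sign (y - b) : SignType) : ℤ) :=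
    SignType.intCast_strictMono.monotone.comp
      (SignType.sign.monotone.comp fun _ _ h => sub_le_sub_right h b)
  have hlog : (fun y : ℝ => Int.log 2 |y - b|) = fun y => ⌊Real.logb 2 |y - b|⌋ := by
    funext y; exact_mod_cast (Real.floor_logb_natCast (b := 2) (abs_nonneg (y - b))).symm
  refine hsign.measurable.prodMk ?_
  rw [hlog]
  exact Int.measurable_floor.comp
    ((Real.measurable_log.comp (measurable_id.sub_const b).abs).div_const _)

lemma dist_lt_dist_of_dyadicIdx_eq {b y z : ℝ} (h : dyadicIdx b y = dyadicIdx b z)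
    (hyz : y ≠ z) : dist y z < dist y b := by
  simp only [dyadicIdx, Prod.mk.injEq] at h
  obtain ⟨hsign, hlog⟩ := h
  have hsign' := SignType.intCast_strictMono.injective hsign
  rw [Real.dist_eq, Real.dist_eq]
  rcases lt_trichotomy (y - b) 0 with hy | hy | hy
  · have hz : z - b < 0 := sign_eq_neg_one_iff.mp (hsign' ▸ sign_neg hy)
    rw [abs_of_neg hy, abs_of_neg hz] at hlog
    have := abs_sub_lt_of_intLog_eq (neg_pos.mpr hy) (neg_pos.mpr hz) hlog
    rw [abs_of_neg hy, abs_sub_comm]; convert this using 2; ring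
  · have hz : z - b = 0 := sign_eq_zero_iff.mp (hsign' ▸ sign_eq_zero_iff.mpr hy)
    exact absurd (by linarith) hyz
  · have hz : 0 < z - b := sign_eq_one_iff.mp (hsign' ▸ sign_pos hy)
    rw [abs_of_pos hy, abs_of_pos hz] at hlog
    have := abs_sub_lt_of_intLog_eq hy hz hlog
    rw [abs_of_pos hy]; convert this using 2; ring

section OrdConnected

variable {α : Type*} [ConditionallyCompleteLinearOrder α]

lemma Set.OrdConnected.csSup_mem_Icc {s : Set α} (hs : s.OrdConnected) {u v : α} (hu : u ∈ s)
    (hv : v ∉ s) (huv : u ≤ v) : sSup s ∈ Icc u v := by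
  have hlt : ∀ z ∈ s, z < v := fun z hz => lt_of_not_ge fun hvz => hv (hs.out hu hz ⟨huv, hvz⟩)
  exact ⟨le_csSup ⟨v, fun z hz => (hlt z hz).le⟩ hu, csSup_le ⟨u, hu⟩ fun z hz => (hlt z hz).le⟩

lemma Set.OrdConnected.csInf_mem_Icc {s : Set α} (hs : s.OrdConnected) {u v : α} (hu : u ∈ s)
    (hv : v ∉ s) (hvu : v ≤ u) : sInf s ∈ Icc v u := by
  have hlt : ∀ z ∈ s, v < z := fun z hz => lt_of_not_ge fun hzv => hv (hs.out hz hu ⟨hzv, hvu⟩)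
  exact ⟨le_csInf ⟨u, hu⟩ fun z hz => (hlt z hz).le, csInf_le ⟨v, fun z hz => (hlt z hz).le⟩ hu⟩

lemma Set.OrdConnected.csInf_mem_uIcc_or_csSup_mem_uIcc {s : Set α} (hs : s.OrdConnected)
    {u v : α} (hu : u ∈ s) (hv : v ∉ s) : sInf s ∈ uIcc u v ∨ sSup s ∈ uIcc u v := by
  rcases le_total u v with huv | hvu
  · exact Or.inr (Icc_subset_uIcc (hs.csSup_mem_Icc hu hv huv))
  · exact Or.inl (Icc_subset_uIcc' (hs.csInf_mem_Icc hu hv hvu))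

lemma exists_finset_mem_uIcc_of_xor_mem_iUnion {ι : Type*} [Finite ι] {I : ι → Set α}
    (hI : ∀ i, (I i).OrdConnected) :
    ∃ B : Finset α, ∀ u v, Xor (u ∈ ⋃ i, I i) (v ∈ ⋃ i, I i) → ∃ b ∈ B, b ∈ uIcc u v := by
  have hfin := (finite_range fun i => sInf (I i)).union (finite_range fun i => sSup (I i))
  refine ⟨hfin.toFinset, ?_⟩
  have key : ∀ u v, u ∈ ⋃ i, I i → v ∉ ⋃ i, I i → ∃ b ∈ hfin.toFinset, b ∈ uIcc u v := by
    intro u v hu hv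
    obtain ⟨i, hui⟩ := mem_iUnion.mp hu
    rcases (hI i).csInf_mem_uIcc_or_csSup_mem_uIcc hui (fun h => hv (mem_iUnion_of_mem i h))
      with h | h <;> exact ⟨_, by simp, h⟩
  rintro u v (⟨hu, hv⟩ | ⟨hv, hu⟩)
  · exact key u v hu hv
  · obtain ⟨b, hbB, hb⟩ := key v u hv hu
    exact ⟨b, hbB, uIcc_comm v u ▸ hb⟩

end OrdConnected

theorem nn_consistent_finite_union_of_intervals_general
    {Ω : Type} [MeasurableSpace Ω] (μ : Measure Ω)
    (Xp : ℕ → Ω → ℝ) (hSMV : SMV μ Xp)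
    (n : ℕ) (I : Fin n → Set ℝ) (hI : ∀ i, (I i).OrdConnected) :
    ∀ᵐ ω ∂μ, Tendsto (fun T => nnAvgLoss (fun t => Xp t ω) (⋃ i, I i) T)
      atTop (𝓝 0) := by
  obtain ⟨B, hB⟩ := exists_finset_mem_uIcc_of_xor_mem_iUnion hI
  have hB' : ∀ u v, Xor (u ∈ ⋃ i, I i) (v ∈ ⋃ i, I i) → ∃ b ∈ B, dist u b ≤ dist u v :=
    fun u v h => (hB u v h).imp fun _ ⟨hbB, hb⟩ => ⟨hbB, Real.dist_left_le_of_mem_uIcc hb⟩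
  have hvisits : ∀ᵐ ω ∂μ, ∀ b ∈ B, Tendsto
      (fun T : ℕ => (((fun t => dyadicIdx b (Xp t ω)) '' Iio T).ncard : ℝ) / T) atTop (𝓝 0) :=
    (eventually_all_finset B).mpr fun b _ =>
      hSMV.ae_tendsto_ncard_image_div (measurable_dyadicIdx b)
  filter_upwards [hvisits] with ω hω
  have hsum := tendsto_finsetSum B hω
  rw [Finset.sum_const_zero] at hsum
  exact squeeze_zero (fun T => by rw [nnAvgLoss]; positivity)
    (nnAvgLoss_le_sum_ncard_image (fun _ _ _ => dist_lt_dist_of_dyadicIdx_eq) _ hB') hsum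

/-- For every stochastic process on `ℝ` satisfying condition SMV,
the nearest neighbor rule is consistent on the indicator of any finite union of
intervals. -/
theorem nn_consistent_finite_union_of_intervals
    {Ω : Type} [MeasurableSpace Ω] (μ : Measure Ω) [IsProbabilityMeasure μ]
    (Xp : ℕ → Ω → ℝ) (hX : ∀ t, Measurable (Xp t)) (hSMV : SMV μ Xp)
    (n : ℕ) (I : Fin n → Set ℝ) (hI : ∀ i, (I i).OrdConnected) :
    ∀ᵐ ω ∂μ, Tendsto (fun T => nnAvgLoss (fun t => Xp t ω) (⋃ i, I i) T)
      atTop (𝓝 0) :=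
  nn_consistent_finite_union_of_intervals_general μ Xp hSMV n I hI
end

section
/- Let 𝒳 = ℝ with the Euclidean metric and let 𝕏 be a stochastic process on ℝ satisfying condition SMV. Then for every a ∈ ℝ, the nearest neighbor rule is consistent on the targets f* = 𝟙_{(−∞,a)} and f* = 𝟙_{(−∞,a]}: L_𝕏(NN, f*; T) → 0 almost surely as T → ∞. -/
open MeasureTheory Filter Topology

/- ### Auxiliary material -/

lemma nnIdx_spec {X : Type} [MetricSpace X] (x : ℕ → X) {t : ℕ} (ht : 0 < t) :
    nnIdx x t < t ∧ ∀ u, u < t → dist (x t) (x (nnIdx x t)) ≤ dist (x t) (x u) := by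
  classical
  have h : ∃ s, s < t ∧ ∀ u, u < t → dist (x t) (x s) ≤ dist (x t) (x u) := by
    obtain ⟨s, hs, hmin⟩ := Finset.exists_min_image (Finset.range t)
      (fun s => dist (x t) (x s)) ⟨0, Finset.mem_range.2 ht⟩
    exact ⟨s, Finset.mem_range.1 hs, fun u hu => hmin u (Finset.mem_range.2 hu)⟩
  unfold nnIdx
  rw [dif_pos h]
  exact @Nat.find_spec _ (fun a => Classical.propDecidable _) h

lemma nnAvgLoss_nonneg {X : Type} [MetricSpace X] (x : ℕ → X) (A : Set X) (T : ℕ) :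
    0 ≤ nnAvgLoss x A T := by
  unfold nnAvgLoss
  exact mul_nonneg (by positivity) (Finset.sum_nonneg fun t _ => abs_nonneg _)

/-- The key deterministic bound: the average NN loss is controlled by the number of
cells visited, for any partition `A` whose cells separate opposite labels. -/
lemma det_bound (x : ℕ → ℝ) (S : Set ℝ) (A : ℕ → Set ℝ)
    (hcover : ∀ y : ℝ, ∃ k, y ∈ A k)
    (hdisj : Pairwise (Function.onFun Disjoint A))
    (hP : ∀ k, ∀ p ∈ A k, ∀ q ∈ A k, ∀ z : ℝ,
      ¬ (z ∈ S ↔ p ∈ S) → dist p q < dist p z)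
    (T : ℕ) :
    nnAvgLoss x S T ≤ (Set.ncard {k : ℕ | ∃ t, t < T ∧ x t ∈ A k} : ℝ) / T := by
  classical
  set c : ℕ → ℕ := fun t => (hcover (x t)).choose with hc_def
  have hc : ∀ t, x t ∈ A (c t) := fun t => (hcover (x t)).choose_spec
  have hunique : ∀ t k, x t ∈ A k → k = c t := by
    intro t k hk
    by_contra hne
    exact Set.disjoint_left.1 (hdisj hne) hk (hc t)
  have hVT : {k : ℕ | ∃ t, t < T ∧ x t ∈ A k} = ↑((Finset.range T).image c) := by
    ext k
    simp only [Set.mem_setOf_eq, Finset.coe_image, Set.mem_image, Finset.mem_coe,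
      Finset.mem_range]
    constructor
    · rintro ⟨t, ht, hk⟩; exact ⟨t, ht, (hunique t k hk).symm⟩
    · rintro ⟨t, ht, rfl⟩; exact ⟨t, ht, hc t⟩
  set M := (Finset.range T).filter
    (fun t => ¬ (x (nnIdx x t) ∈ S ↔ x t ∈ S)) with hM
  have hsum : nnAvgLoss x S T = (T : ℝ)⁻¹ * M.card := by
    unfold nnAvgLoss
    congr 1
    have hterm : ∀ t : ℕ,
        |S.indicator (fun _ => (1 : ℝ)) (x (nnIdx x t)) -
          S.indicator (fun _ => (1 : ℝ)) (x t)| =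
        if ¬ (x (nnIdx x t) ∈ S ↔ x t ∈ S) then (1 : ℝ) else 0 := by
      intro t
      by_cases hp : x (nnIdx x t) ∈ S <;> by_cases hq : x t ∈ S <;>
        simp [Set.indicator_of_mem, Set.indicator_of_notMem, hp, hq]
    rw [Finset.sum_congr rfl (fun t _ => hterm t), Finset.sum_boole]
  -- at most one mistake per cell
  have hclaim : ∀ t1 t2, t1 < t2 → t2 ∈ M → c t1 = c t2 → False := by
    intro t1 t2 hlt ht2 hceq
    have hmist := (Finset.mem_filter.1 ht2).2
    have hspec := nnIdx_spec x (Nat.pos_of_ne_zero (by omega) : 0 < t2)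
    have hle := hspec.2 t1 hlt
    have h1 : x t1 ∈ A (c t2) := hceq ▸ hc t1
    have := hP (c t2) (x t2) (hc t2) (x t1) h1 (x (nnIdx x t2)) hmist
    linarith
  have hinj : Set.InjOn c ↑M := by
    intro t1 h1 t2 h2 hceq
    by_contra hne
    rcases Nat.lt_or_ge t1 t2 with h | h
    · exact hclaim t1 t2 h (by simpa using h2) hceq
    · exact hclaim t2 t1 (by omega) (by simpa using h1) hceq.symm
  have hcard : (M.card : ℝ) ≤ ((Finset.range T).image c).card := by
    exact_mod_cast Finset.card_le_card_of_injOn c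
      (fun t ht => Finset.mem_image_of_mem c (Finset.mem_filter.1 ht).1) hinj
  rw [hsum, hVT, Set.ncard_coe_finset, div_eq_inv_mul]
  exact mul_le_mul_of_nonneg_left hcard (by positivity)

/-- Cells of the half-line partition of `ℝ` around the threshold `a`. -/
def halfCell (a : ℝ) : Option (Bool × ℤ) → Set ℝ
  | none => {a}
  | some (true, n) => Set.Ico (a + 2 ^ n) (a + 2 ^ (n + 1))
  | some (false, n) => Set.Ioc (a - 2 ^ (n + 1)) (a - 2 ^ n)

lemma two_zpow_pos (n : ℤ) : (0 : ℝ) < 2 ^ n := zpow_pos (by norm_num) n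

lemma two_zpow_succ (n : ℤ) : (2 : ℝ) ^ (n + 1) = 2 ^ n * 2 :=
  zpow_add_one₀ (by norm_num) n

lemma two_zpow_le {n m : ℤ} (h : n < m) : (2 : ℝ) ^ (n + 1) ≤ 2 ^ m :=
  zpow_le_zpow_right₀ (by norm_num) (by omega)

lemma halfCell_cover (a : ℝ) (y : ℝ) : ∃ p, y ∈ halfCell a p := by
  rcases lt_trichotomy y a with h | h | h
  · obtain ⟨n, hn⟩ := exists_mem_Ico_zpow (x := a - y) (y := 2)
      (by linarith) (by norm_num)
    rw [Set.mem_Ico] at hn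
    exact ⟨some (false, n), by
      simp only [halfCell, Set.mem_Ioc]
      constructor <;> linarith [hn.1, hn.2]⟩
  · exact ⟨none, by simp [halfCell, h]⟩
  · obtain ⟨n, hn⟩ := exists_mem_Ico_zpow (x := y - a) (y := 2)
      (by linarith) (by norm_num)
    rw [Set.mem_Ico] at hn
    exact ⟨some (true, n), by
      simp only [halfCell, Set.mem_Ico]
      constructor <;> linarith [hn.1, hn.2]⟩

lemma halfCell_disjoint (a : ℝ) : Pairwise (Function.onFun Disjoint (halfCell a)) := by
  intro p q hne
  rw [Function.onFun, Set.disjoint_left]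
  intro y hyp hyq
  match p, q with
  | none, none => exact hne rfl
  | none, some (true, n) =>
    simp only [halfCell, Set.mem_singleton_iff] at hyp
    simp only [halfCell, Set.mem_Ico] at hyq
    have := two_zpow_pos n; linarith [hyq.1]
  | none, some (false, n) =>
    simp only [halfCell, Set.mem_singleton_iff] at hyp
    simp only [halfCell, Set.mem_Ioc] at hyq
    have := two_zpow_pos n; linarith [hyq.2]
  | some (true, n), none =>
    simp only [halfCell, Set.mem_singleton_iff] at hyq
    simp only [halfCell, Set.mem_Ico] at hyp
    have := two_zpow_pos n; linarith [hyp.1]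
  | some (false, n), none =>
    simp only [halfCell, Set.mem_singleton_iff] at hyq
    simp only [halfCell, Set.mem_Ioc] at hyp
    have := two_zpow_pos n; linarith [hyp.2]
  | some (true, n), some (false, m) =>
    simp only [halfCell, Set.mem_Ico] at hyp
    simp only [halfCell, Set.mem_Ioc] at hyq
    have := two_zpow_pos n; have := two_zpow_pos m
    linarith [hyp.1, hyq.2]
  | some (false, n), some (true, m) =>
    simp only [halfCell, Set.mem_Ioc] at hyp
    simp only [halfCell, Set.mem_Ico] at hyq
    have := two_zpow_pos n; have := two_zpow_pos m
    linarith [hyp.2, hyq.1]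
  | some (true, n), some (true, m) =>
    simp only [halfCell, Set.mem_Ico] at hyp hyq
    have hnm : n ≠ m := by rintro rfl; exact hne rfl
    rcases lt_or_gt_of_ne hnm with h | h
    · have := two_zpow_le h; linarith [hyp.2, hyq.1]
    · have := two_zpow_le h; linarith [hyq.2, hyp.1]
  | some (false, n), some (false, m) =>
    simp only [halfCell, Set.mem_Ioc] at hyp hyq
    have hnm : n ≠ m := by rintro rfl; exact hne rfl
    rcases lt_or_gt_of_ne hnm with h | h
    · have := two_zpow_le h; linarith [hyp.1, hyq.2]
    · have := two_zpow_le h; linarith [hyq.1, hyp.2]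

lemma halfCell_measurable (a : ℝ) (p : Option (Bool × ℤ)) :
    MeasurableSet (halfCell a p) := by
  match p with
  | none => exact measurableSet_singleton a
  | some (true, n) => exact measurableSet_Ico
  | some (false, n) => exact measurableSet_Ioc

/-- Separation property: within each cell, distances are smaller than to any
oppositely-labeled point, for any target `S` with `Iio a ⊆ S ⊆ Iic a`. -/
lemma halfCell_sep (a : ℝ) (S : Set ℝ) (hS1 : Set.Iio a ⊆ S) (hS2 : S ⊆ Set.Iic a)
    (p : Option (Bool × ℤ)) :
    ∀ u ∈ halfCell a p, ∀ v ∈ halfCell a p, ∀ z : ℝ,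
      ¬ (z ∈ S ↔ u ∈ S) → dist u v < dist u z := by
  intro u hu v hv z hz
  rw [Real.dist_eq, Real.dist_eq]
  match p with
  | none =>
    simp only [halfCell, Set.mem_singleton_iff] at hu hv
    have hzu : z ≠ u := fun h => hz (by rw [h])
    calc |u - v| = 0 := by rw [hu, hv, sub_self, abs_zero]
    _ < |u - z| := abs_pos.2 (sub_ne_zero.2 (Ne.symm hzu))
  | some (true, n) =>
    simp only [halfCell, Set.mem_Ico] at hu hv
    have hpos := two_zpow_pos n
    have hsucc := two_zpow_succ n
    have huS : u ∉ S := fun h => by have := hS2 h; simp only [Set.mem_Iic] at this; linarith [hu.1]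
    have hzS : z ∈ S := by
      by_contra h
      exact hz ⟨fun hh => absurd hh h, fun hh => absurd hh huS⟩
    have hza : z ≤ a := hS2 hzS
    have h1 : |u - v| < 2 ^ n := abs_sub_lt_iff.2 ⟨by linarith [hu.2, hv.1], by linarith [hv.2, hu.1]⟩
    have h2 : (2 : ℝ) ^ n ≤ |u - z| := le_trans (by linarith [hu.1]) (le_abs_self _)
    linarith
  | some (false, n) =>
    simp only [halfCell, Set.mem_Ioc] at hu hv
    have hpos := two_zpow_pos n
    have hsucc := two_zpow_succ n
    have huS : u ∈ S := hS1 (by simp only [Set.mem_Iio]; linarith [hu.2])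
    have hzS : z ∉ S := fun h => hz ⟨fun _ => huS, fun _ => h⟩
    have hza : a ≤ z := by
      by_contra h
      exact hzS (hS1 (by simp only [Set.mem_Iio]; linarith))
    have h1 : |u - v| < 2 ^ n := abs_sub_lt_iff.2 ⟨by linarith [hu.2, hv.1], by linarith [hv.2, hu.1]⟩
    have h2 : (2 : ℝ) ^ n ≤ |u - z| := by
      rw [abs_sub_comm]
      exact le_trans (by linarith [hu.2]) (le_abs_self _)
    linarith

/-- An enumeration of the index type of the half-line partition. -/
noncomputable def idxE : ℕ ≃ Option (Bool × ℤ) :=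
  letI : Infinite (Bool × ℤ) :=
    Infinite.of_injective (fun n : ℤ => ((true, n) : Bool × ℤ))
      (fun a b h => by simpa using h)
  letI : Denumerable (Option (Bool × ℤ)) := Denumerable.ofEncodableOfInfinite _
  (Denumerable.eqv (Option (Bool × ℤ))).symm

/-- The half-line partition, indexed by `ℕ`. -/
noncomputable def Acells (a : ℝ) : ℕ → Set ℝ := fun k => halfCell a (idxE k)

/-- For every stochastic process on `ℝ` satisfying condition SMV and
every `a : ℝ`, the nearest neighbor rule is consistent on the targets `𝟙_{(-∞,a)}`
and `𝟙_{(-∞,a]}`. -/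
theorem nn_consistent_halflines
    {Ω : Type} [MeasurableSpace Ω] (μ : Measure Ω) [IsProbabilityMeasure μ]
    (Xp : ℕ → Ω → ℝ) (hX : ∀ t, Measurable (Xp t)) (hSMV : SMV μ Xp) (a : ℝ) :
    (∀ᵐ ω ∂μ, Tendsto (fun T => nnAvgLoss (fun t => Xp t ω) (Set.Iio a) T)
      atTop (𝓝 0)) ∧
    (∀ᵐ ω ∂μ, Tendsto (fun T => nnAvgLoss (fun t => Xp t ω) (Set.Iic a) T)
      atTop (𝓝 0)) := by
  have hmeas : ∀ k, MeasurableSet (Acells a k) := fun k => halfCell_measurable a _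
  have hdisj : Pairwise (Function.onFun Disjoint (Acells a)) :=
    fun k l hne => halfCell_disjoint a (fun h => hne (idxE.injective h))
  have hcov' : ∀ y : ℝ, ∃ k, y ∈ Acells a k := by
    intro y
    obtain ⟨p, hp⟩ := halfCell_cover a y
    exact ⟨idxE.symm p, by simpa [Acells] using hp⟩
  have hcover : (⋃ k, Acells a k) = Set.univ :=
    Set.eq_univ_of_forall fun y => Set.mem_iUnion.2 (hcov' y)
  have key : ∀ S : Set ℝ, Set.Iio a ⊆ S → S ⊆ Set.Iic a →
      ∀ᵐ ω ∂μ, Tendsto (fun T => nnAvgLoss (fun t => Xp t ω) S T) atTop (𝓝 0) := by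
    intro S hS1 hS2
    filter_upwards [hSMV (Acells a) hmeas hdisj hcover] with ω hω
    refine squeeze_zero (fun T => nnAvgLoss_nonneg _ _ _) (fun T => ?_) hω
    exact det_bound (fun t => Xp t ω) S (Acells a) hcov' hdisj
      (fun k => halfCell_sep a S hS1 hS2 (idxE k)) T
  exact ⟨key _ subset_rfl Set.Iio_subset_Iic_self,
    key _ Set.Iio_subset_Iic_self subset_rfl⟩
end

section
/- Let x_t = (−1/3)^t for t ≥ 1 (a deterministic sequence in [−1,1]) and f* = 𝟙_{[0,1]}. Then for every t ≥ 2, the unique nearest neighbor of x_t among x_1,...,x_{t−1} is x_{t−1}, and f*(x_{t−1}) ≠ f*(x_t). Consequently the nearest neighbor average loss satisfies (1/T)Σ_{t=1}^T 𝟙(f*(x_{φ(t)}) ≠ f*(x_t)) ≥ (T−1)/T for all T ≥ 1, so nearest neighbor is not consistent on f* for this process. -/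
open MeasureTheory Filter Topology

lemma aux_dist_lt (m s : ℕ) (hs : s + 1 ≤ m) :
    |((-1:ℝ)/3) ^ (m + 2) - ((-1:ℝ)/3) ^ (m + 1)| <
      |((-1:ℝ)/3) ^ (m + 2) - ((-1:ℝ)/3) ^ (s + 1)| := by
  have habs : |(-1:ℝ)/3| = 1/3 := by rw [abs_div]; norm_num
  have h1 : |((-1:ℝ)/3) ^ (m + 2) - ((-1:ℝ)/3) ^ (m + 1)| = (4/3) * (1/3:ℝ) ^ (m + 1) := by
    have e : ((-1:ℝ)/3) ^ (m + 2) - ((-1:ℝ)/3) ^ (m + 1)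
        = ((-1:ℝ)/3) ^ (m + 1) * ((-1:ℝ)/3 - 1) := by ring
    have e2 : |(-1:ℝ)/3 - 1| = 4/3 := by
      rw [show (-1:ℝ)/3 - 1 = -(4/3) by ring, abs_neg, abs_of_nonneg] ; norm_num
    rw [e, abs_mul, abs_pow, habs, e2]; ring
  have h2 : (1/3:ℝ) ^ (s + 1) - (1/3:ℝ) ^ (m + 2)
      ≤ |((-1:ℝ)/3) ^ (m + 2) - ((-1:ℝ)/3) ^ (s + 1)| := by
    have h := abs_sub_abs_le_abs_sub (((-1:ℝ)/3) ^ (s + 1)) (((-1:ℝ)/3) ^ (m + 2))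
    rw [abs_sub_comm, abs_pow, abs_pow, habs] at h
    exact h
  have h3 : (1/3:ℝ) ^ m ≤ (1/3:ℝ) ^ (s + 1) :=
    pow_le_pow_of_le_one (by norm_num) (by norm_num) hs
  have h4 : (0:ℝ) < (1/3:ℝ) ^ m := by positivity
  have h5 : (1/3:ℝ) ^ (m + 1) = (1/3:ℝ) ^ m * (1/3) := pow_succ _ _
  have h6 : (1/3:ℝ) ^ (m + 2) = (1/3:ℝ) ^ m * (1/3) * (1/3) := by
    rw [pow_succ, pow_succ]
  calc |((-1:ℝ)/3) ^ (m + 2) - ((-1:ℝ)/3) ^ (m + 1)| = (4/3) * (1/3:ℝ) ^ (m + 1) := h1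
    _ < (1/3:ℝ) ^ (s + 1) - (1/3:ℝ) ^ (m + 2) := by linarith
    _ ≤ _ := h2

lemma aux_mem_iff (k : ℕ) : ((-1:ℝ)/3) ^ k ∈ Set.Icc (0:ℝ) 1 ↔ Even k := by
  constructor
  · intro hk
    by_contra hodd
    have hodd' : Odd k := Nat.not_even_iff_odd.mp hodd
    have : ((-1:ℝ)/3) ^ k < 0 := Odd.pow_neg hodd' (by norm_num)
    exact absurd hk.1 (not_le.mpr this)
  · intro hk
    constructor
    · exact hk.pow_nonneg _
    · have h : |((-1:ℝ)/3) ^ k| ≤ 1 := by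
        rw [abs_pow]
        refine pow_le_one₀ (abs_nonneg _) ?_
        rw [abs_div]; norm_num
      exact (abs_le.mp h).2

lemma aux_nnIdx_zero : nnIdx (fun n => ((-1 : ℝ) / 3) ^ (n + 1)) 0 = 0 := by
  rw [nnIdx, dif_neg]
  rintro ⟨s, hs, -⟩
  omega

lemma aux_nnIdx_succ (m : ℕ) :
    nnIdx (fun n => ((-1 : ℝ) / 3) ^ (n + 1)) (m + 1) = m := by
  classical
  have hPm : m < m + 1 ∧ ∀ u, u < m + 1 →
      dist (((-1:ℝ)/3) ^ (m + 1 + 1)) (((-1:ℝ)/3) ^ (m + 1)) ≤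
        dist (((-1:ℝ)/3) ^ (m + 1 + 1)) (((-1:ℝ)/3) ^ (u + 1)) := by
    refine ⟨Nat.lt_succ_self m, fun u hu => ?_⟩
    rcases eq_or_lt_of_le (Nat.lt_succ_iff.mp hu) with h | h
    · subst h; exact le_rfl
    · have := aux_dist_lt m u h
      rw [Real.dist_eq, Real.dist_eq]
      exact le_of_lt (by simpa using this)
  have hex : ∃ s, s < m + 1 ∧ ∀ u, u < m + 1 →
      dist ((fun n => ((-1:ℝ)/3) ^ (n + 1)) (m + 1)) ((fun n => ((-1:ℝ)/3) ^ (n + 1)) s) ≤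
        dist ((fun n => ((-1:ℝ)/3) ^ (n + 1)) (m + 1)) ((fun n => ((-1:ℝ)/3) ^ (n + 1)) u) :=
    ⟨m, hPm⟩
  rw [nnIdx, dif_pos hex]
  refine le_antisymm (@Nat.find_min' _ (fun _ => Classical.propDecidable _) hex _ hPm) ?_
  by_contra hlt
  push_neg at hlt
  have hspec := @Nat.find_spec _ (fun _ => Classical.propDecidable _) hex
  have h2 : |((-1:ℝ)/3) ^ (m + 2) -
        ((-1:ℝ)/3) ^ ((@Nat.find _ (fun _ => Classical.propDecidable _) hex) + 1)| ≤
      |((-1:ℝ)/3) ^ (m + 2) - ((-1:ℝ)/3) ^ (m + 1)| := by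
    have h3 := hspec.2 m (Nat.lt_succ_self m)
    rw [Real.dist_eq, Real.dist_eq] at h3
    exact h3
  have h4 := aux_dist_lt m (@Nat.find _ (fun _ => Classical.propDecidable _) hex)
    (Nat.succ_le_of_lt hlt)
  linarith

lemma aux_term (m : ℕ) :
    |(Set.Icc (0:ℝ) 1).indicator (fun _ => (1 : ℝ))
        ((fun n => ((-1 : ℝ) / 3) ^ (n + 1)) (nnIdx (fun n => ((-1 : ℝ) / 3) ^ (n + 1)) (m+1))) -
      (Set.Icc (0:ℝ) 1).indicator (fun _ => (1 : ℝ))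
        ((fun n => ((-1 : ℝ) / 3) ^ (n + 1)) (m+1))| = 1 := by
  rw [aux_nnIdx_succ]
  simp only []
  have hm2 : ¬ (Even (m + 1) ↔ Even (m + 1 + 1)) := by
    simp only [Nat.even_iff]; omega
  by_cases h : Even (m + 1)
  · have h2 : ¬ Even (m + 1 + 1) := fun hc => hm2 ⟨fun _ => hc, fun _ => h⟩
    rw [Set.indicator_of_mem ((aux_mem_iff _).mpr h),
      Set.indicator_of_notMem (fun hc => h2 ((aux_mem_iff _).mp hc))]
    norm_num
  · have h2 : Even (m + 1 + 1) := by
      rcases Nat.even_or_odd (m + 1 + 1) with he | ho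
      · exact he
      · exact absurd (Nat.Odd.sub_odd ho odd_one) (by simpa using h)
    rw [Set.indicator_of_notMem (fun hc => h ((aux_mem_iff _).mp hc)),
      Set.indicator_of_mem ((aux_mem_iff _).mpr h2)]
    norm_num

/-- For the deterministic sequence `x_t = (-1/3)^t`, `t ≥ 1`
(indexed here by `x n = (-1/3)^(n+1)`), and the target `f* = 𝟙_{[0,1]}`: for every
`t ≥ 1` the unique nearest neighbor of `x t` among the previous points is `x (t-1)`,
whose label differs from that of `x t`; hence the nearest neighbor average loss is at
least `(T-1)/T` for every `T ≥ 1`, and nearest neighbor is not consistent on `f*`. -/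
theorem nn_fails_on_alternating_sequence :
    (∀ t : ℕ, 1 ≤ t →
      nnIdx (fun n => ((-1 : ℝ) / 3) ^ (n + 1)) t = t - 1 ∧
      (∀ s, s < t → s ≠ t - 1 →
        |((-1 : ℝ) / 3) ^ (t + 1) - ((-1 : ℝ) / 3) ^ (t - 1 + 1)| <
          |((-1 : ℝ) / 3) ^ (t + 1) - ((-1 : ℝ) / 3) ^ (s + 1)|) ∧
      ¬((((-1 : ℝ) / 3) ^ (t - 1 + 1) ∈ Set.Icc (0 : ℝ) 1) ↔
        (((-1 : ℝ) / 3) ^ (t + 1) ∈ Set.Icc (0 : ℝ) 1))) ∧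
    (∀ T : ℕ, 1 ≤ T →
      ((T : ℝ) - 1) / T ≤
        nnAvgLoss (fun n => ((-1 : ℝ) / 3) ^ (n + 1)) (Set.Icc 0 1) T) ∧
    ¬ Tendsto (fun T => nnAvgLoss (fun n => ((-1 : ℝ) / 3) ^ (n + 1)) (Set.Icc 0 1) T)
      atTop (𝓝 0) := by
  have hloss : ∀ T : ℕ, 1 ≤ T →
      ((T : ℝ) - 1) / T ≤
        nnAvgLoss (fun n => ((-1 : ℝ) / 3) ^ (n + 1)) (Set.Icc 0 1) T := by
    intro T hT
    obtain ⟨N, rfl⟩ : ∃ N, T = N + 1 := ⟨T - 1, by omega⟩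
    rw [nnAvgLoss, Finset.sum_range_succ']
    have h0 : |(Set.Icc (0:ℝ) 1).indicator (fun _ => (1 : ℝ))
        ((fun n => ((-1 : ℝ) / 3) ^ (n + 1)) (nnIdx (fun n => ((-1 : ℝ) / 3) ^ (n + 1)) 0)) -
      (Set.Icc (0:ℝ) 1).indicator (fun _ => (1 : ℝ))
        ((fun n => ((-1 : ℝ) / 3) ^ (n + 1)) 0)| = 0 := by
      rw [aux_nnIdx_zero]; simp
    rw [h0, add_zero]
    have hsum : ∑ i ∈ Finset.range N,
        |(Set.Icc (0:ℝ) 1).indicator (fun _ => (1 : ℝ))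
          ((fun n => ((-1 : ℝ) / 3) ^ (n + 1)) (nnIdx (fun n => ((-1 : ℝ) / 3) ^ (n + 1)) (i+1))) -
        (Set.Icc (0:ℝ) 1).indicator (fun _ => (1 : ℝ))
          ((fun n => ((-1 : ℝ) / 3) ^ (n + 1)) (i+1))| = N := by
      rw [Finset.sum_congr rfl (fun i _ => aux_term i)]
      simp
    rw [hsum]
    have h1 : ((N + 1 : ℕ) : ℝ) = (N : ℝ) + 1 := by push_cast; ring
    rw [h1, div_eq_inv_mul]
    have h2 : ((N:ℝ) + 1 - 1) = (N : ℝ) := by ring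
    rw [h2]
  have hnn : ∀ t : ℕ, 1 ≤ t →
      nnIdx (fun n => ((-1 : ℝ) / 3) ^ (n + 1)) t = t - 1 := by
    intro t ht
    obtain ⟨m, rfl⟩ : ∃ m, t = m + 1 := ⟨t - 1, by omega⟩
    simpa using aux_nnIdx_succ m
  refine ⟨fun t ht => ?_, hloss, ?_⟩
  · obtain ⟨m, rfl⟩ : ∃ m, t = m + 1 := ⟨t - 1, by omega⟩
    have ht1 : m + 1 - 1 = m := by omega
    rw [ht1]
    refine ⟨by simpa using aux_nnIdx_succ m, fun s hs hsm => ?_, ?_⟩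
    · have hsm' : s + 1 ≤ m := by omega
      exact aux_dist_lt m s hsm' 
    · rw [aux_mem_iff, aux_mem_iff]
      simp only [Nat.even_iff]
      omega
  · intro h
    have hev : ∀ᶠ T : ℕ in atTop,
        nnAvgLoss (fun n => ((-1 : ℝ) / 3) ^ (n + 1)) (Set.Icc 0 1) T < 1/2 :=
      h.eventually (gt_mem_nhds (by norm_num : (0:ℝ) < 1/2))
    obtain ⟨T, hT⟩ := (hev.and (eventually_ge_atTop 2)).exists
    have h1 : (1:ℝ)/2 ≤ ((T : ℝ) - 1) / T := by
      have hT2 : (2:ℝ) ≤ (T : ℝ) := by exact_mod_cast hT.2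
      rw [le_div_iff₀ (by linarith)]
      linarith
    have := hloss T (by omega)
    linarith [hT.1]
end
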